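/- The pair (a·d + c·b, b·d² + b²·d) is a regular sequence in S: a·d + c·b is a nonzerodivisor in S, and multiplication by b·d² + b²·d is injective on the quotient S ⧸ (a·d + c·b), and the quotient by both elements is nonzero. -/

import Mathlib

/-!
In the UFD `S`, a nonzero `f` followed by `g` is a regular sequence as soon as `f` and `g` are
relatively prime. Here `g = b d² + b² d = b · d · (b + d)` is a product of three primes (`b + d` is
the image of the prime `b` under the linear change of variables `b ↦ b + d`), and none of them
divides `f = a d + c b`: each one vanishes at some point of `𝔽₂⁴` where `f` does not. Finally, both
`f` and `g` vanish at the origin, so they generate a proper ideal.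
-/

open MvPolynomial

/-- `S = ℤ/2[a,b,c,d] ≅ H^*(BSO(3)²; ℤ/2)` with `a = w₂'`, `b = w₃'`, `c = w₂''`, `d = w₃''`. -/
noncomputable abbrev S : Type := MvPolynomial (Fin 4) (ZMod 2)

noncomputable def a : S := X 0
noncomputable def b : S := X 1
noncomputable def c : S := X 2
noncomputable def d : S := X 3

namespace MvPolynomial

variable {σ R : Type*} [CommRing R] [DecidableEq σ]

noncomputable def shearEquiv {i j : σ} (hij : i ≠ j) :
    MvPolynomial σ R ≃ₐ[R] MvPolynomial σ R :=
  AlgEquiv.ofAlgHom (aeval (Function.update X i (X i + X j)))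
    (aeval (Function.update X i (X i - X j)))
    (algHom_ext fun k => by
      rcases eq_or_ne k i with rfl | hk <;> simp [Function.update_of_ne, hij.symm, *])
    (algHom_ext fun k => by
      rcases eq_or_ne k i with rfl | hk <;> simp [Function.update_of_ne, hij.symm, *])

theorem shearEquiv_X_self {i j : σ} (hij : i ≠ j) :
    shearEquiv (R := R) hij (X i) = X i + X j := by
  simp [shearEquiv]

theorem prime_X_add_X [IsDomain R] {i j : σ} (hij : i ≠ j) :
    Prime (X i + X j : MvPolynomial σ R) :=
  shearEquiv_X_self (R := R) hij ▸ (MulEquiv.prime_iff (shearEquiv hij)).2 X_prime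

end MvPolynomial

theorem isRelPrime_of_map_eq_zero {A T : Type*} [CommSemiring A] [IsCancelMulZero A]
    [CommSemiring T] (φ : A →+* T)
    {p q : A} (hq : Prime q) (hφq : φ q = 0) (hφp : φ p ≠ 0) : IsRelPrime p q :=
  (hq.irreducible.isRelPrime_iff_not_dvd.2 fun h => hφp (zero_dvd_iff.1 (hφq ▸ map_dvd φ h))).symm

theorem IsRelPrime.eq_zero_of_mk_mul_eq_zero {A : Type*} [CommRing A] [DecompositionMonoid A]
    {f g : A} (h : IsRelPrime f g) (y : A ⧸ Ideal.span {f})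
    (hy : Ideal.Quotient.mk (Ideal.span {f}) g * y = 0) : y = 0 := by
  obtain ⟨x, rfl⟩ := Ideal.Quotient.mk_surjective y
  rw [← map_mul, Ideal.Quotient.eq_zero_iff_mem, Ideal.mem_span_singleton] at hy
  rw [Ideal.Quotient.eq_zero_iff_mem, Ideal.mem_span_singleton]
  exact h.dvd_of_dvd_mul_left hy

theorem eval_ad_add_cb (x : Fin 4 → ZMod 2) :
    eval x (a * d + c * b) = x 0 * x 3 + x 2 * x 1 := by
  simp [a, b, c, d]

theorem bd_sq_add_b_sq_d_eq : b * d ^ 2 + b ^ 2 * d = X 1 * X 3 * (X 1 + X 3) := by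
  simp only [b, d]
  ring

theorem isRelPrime_ad_add_cb : IsRelPrime (a * d + c * b) (b * d ^ 2 + b ^ 2 * d) := by
  rw [bd_sq_add_b_sq_d_eq]
  refine .mul_right (.mul_right ?_ ?_) ?_
  · exact isRelPrime_of_map_eq_zero (eval ![1, 0, 0, 1]) X_prime (by simp)
      (by rw [eval_ad_add_cb]; decide)
  · exact isRelPrime_of_map_eq_zero (eval ![0, 1, 1, 0]) X_prime (by simp)
      (by rw [eval_ad_add_cb]; decide)
  · exact isRelPrime_of_map_eq_zero (eval ![1, 1, 0, 1]) (prime_X_add_X (by decide))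
      (by simp [CharTwo.add_self_eq_zero]) (by rw [eval_ad_add_cb]; decide)

theorem stmt_8 :
    (a * d + c * b) ∈ nonZeroDivisors S ∧
    (∀ y : S ⧸ Ideal.span ({a * d + c * b} : Set S),
      Ideal.Quotient.mk (Ideal.span ({a * d + c * b} : Set S)) (b * d ^ 2 + b ^ 2 * d) * y = 0 →
        y = 0) ∧
    Ideal.span ({a * d + c * b, b * d ^ 2 + b ^ 2 * d} : Set S) ≠ ⊤ := by
  refine ⟨mem_nonZeroDivisors_of_ne_zero fun h => ?_,
    isRelPrime_ad_add_cb.eq_zero_of_mk_mul_eq_zero, ?_⟩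
  · simpa [eval_ad_add_cb] using congrArg (eval ![1, 0, 0, 1]) h
  · refine ne_top_of_le_ne_top (RingHom.ker_ne_top (eval (0 : Fin 4 → ZMod 2)))
      (Ideal.span_le.2 ?_)
    rintro _ (rfl | rfl) <;> simp [a, b, c, d]
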